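/- arXiv:1710.09168 — 3 statements merged into one kernel-verified Lean document; each statement's English description precedes it below -/
import Mathlib

section
/- Let S = {1,...,N} and for each x ∈ ℝⁿ let Q(x) = (q_{ij}(x)) be a conservative transition rate matrix with q_i(x) = Σ_{j≠i} q_{ij}(x) ≤ H for all i, x, and suppose there is c_q > 0 with |q_{ij}(x) − q_{ij}(y)| ≤ c_q|x − y| for all i, j, x, y. For each x, define the consecutive left-closed right-open intervals Γ_{ij}(x) ⊂ [0, ∞), each of length q_{ij}(x), arranged lexicographically in (i,j) (with Γ_{ii}(x) = ∅). Then for all i, j ∈ S and x, y ∈ ℝⁿ, the Lebesgue measure of the symmetric difference satisfies |Γ_{ij}(x) Δ Γ_{ij}(y)| ≤ (2(N−1)N c_q + 1)|x − y|. -/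
open MeasureTheory Finset

lemma sum_lip_aux {n N : ℕ}
    (q : Fin N → Fin N → EuclideanSpace ℝ (Fin n) → ℝ) (c_q : ℝ) (hc : 0 < c_q)
    (hdiag : ∀ i x, q i i x = 0)
    (hLip : ∀ i j x y, |q i j x - q i j y| ≤ c_q * ‖x - y‖)
    (s : Finset (Fin N × Fin N)) (x y : EuclideanSpace ℝ (Fin n)) :
    |(∑ p ∈ s, q p.1 p.2 x) - ∑ p ∈ s, q p.1 p.2 y| ≤
      (N : ℝ) * ((N : ℝ) - 1) * c_q * ‖x - y‖ := by
  have hC : (0:ℝ) ≤ c_q * ‖x - y‖ := by positivity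
  calc |(∑ p ∈ s, q p.1 p.2 x) - ∑ p ∈ s, q p.1 p.2 y|
      = |∑ p ∈ s, (q p.1 p.2 x - q p.1 p.2 y)| := by rw [Finset.sum_sub_distrib]
    _ ≤ ∑ p ∈ s, |q p.1 p.2 x - q p.1 p.2 y| := Finset.abs_sum_le_sum_abs _ _
    _ ≤ ∑ p ∈ s, (if p.1 = p.2 then 0 else c_q * ‖x - y‖) := by
        apply Finset.sum_le_sum
        intro p _
        by_cases h : p.1 = p.2
        · simp [h, hdiag]
        · simpa [h] using hLip p.1 p.2 x y
    _ ≤ ∑ p ∈ (Finset.univ : Finset (Fin N × Fin N)),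
          (if p.1 = p.2 then 0 else c_q * ‖x - y‖) := by
        apply Finset.sum_le_sum_of_subset_of_nonneg (Finset.subset_univ s)
        intro p _ _
        by_cases h : p.1 = p.2 <;> simp [h, hC]
    _ = ((Finset.univ.filter (fun p : Fin N × Fin N => ¬ p.1 = p.2)).card : ℝ)
          * (c_q * ‖x - y‖) := by
        rw [Finset.sum_ite, Finset.sum_const_zero, zero_add, Finset.sum_const,
          nsmul_eq_mul]
    _ ≤ (N : ℝ) * ((N : ℝ) - 1) * c_q * ‖x - y‖ := by
        have hcard : (Finset.univ.filter (fun p : Fin N × Fin N => ¬ p.1 = p.2))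
            = (Finset.univ : Finset (Fin N)).offDiag := by
          ext p
          simp [Finset.mem_offDiag]
        have hle : N ≤ N * N := by nlinarith
        rw [hcard, Finset.offDiag_card]
        simp only [Finset.card_univ, Fintype.card_fin]
        rw [Nat.cast_sub hle]
        push_cast
        ring_nf
        nlinarith [abs_nonneg (0:ℝ)]

/-- Lemma 3.1: Lipschitz control of symmetric differences of the Skorokhod
representation intervals. -/
theorem stmt0 (n N : ℕ) (hN : 1 ≤ N)
    (q : Fin N → Fin N → EuclideanSpace ℝ (Fin n) → ℝ) (H c_q : ℝ) (hc : 0 < c_q)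
    (hqnn : ∀ i j x, 0 ≤ q i j x)
    (hdiag : ∀ i x, q i i x = 0)
    (hH : ∀ i x, ∑ j, q i j x ≤ H)
    (hLip : ∀ i j x y, |q i j x - q i j y| ≤ c_q * ‖x - y‖) :
    ∀ (i j : Fin N) (x y : EuclideanSpace ℝ (Fin n)),
      (volume
        (symmDiff
          (Set.Ico (∑ p ∈ Finset.univ.filter
              (fun p : Fin N × Fin N => p.1 < i ∨ (p.1 = i ∧ p.2 < j)), q p.1 p.2 x)
            ((∑ p ∈ Finset.univ.filter
              (fun p : Fin N × Fin N => p.1 < i ∨ (p.1 = i ∧ p.2 < j)), q p.1 p.2 x) + q i j x))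
          (Set.Ico (∑ p ∈ Finset.univ.filter
              (fun p : Fin N × Fin N => p.1 < i ∨ (p.1 = i ∧ p.2 < j)), q p.1 p.2 y)
            ((∑ p ∈ Finset.univ.filter
              (fun p : Fin N × Fin N => p.1 < i ∨ (p.1 = i ∧ p.2 < j)), q p.1 p.2 y) + q i j y)))).toReal
        ≤ (2 * ((N : ℝ) - 1) * (N : ℝ) * c_q + 1) * ‖x - y‖ := by
  intro i j x y
  set s : Finset (Fin N × Fin N) :=
    Finset.univ.filter (fun p : Fin N × Fin N => p.1 < i ∨ (p.1 = i ∧ p.2 < j)) with hs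
  set ax := ∑ p ∈ s, q p.1 p.2 x with hax
  set ay := ∑ p ∈ s, q p.1 p.2 y with hay
  have hij : (i, j) ∉ s := by simp [hs]
  have hAx : ax + q i j x = ∑ p ∈ insert (i, j) s, q p.1 p.2 x := by
    rw [Finset.sum_insert hij]; ring
  have hAy : ay + q i j y = ∑ p ∈ insert (i, j) s, q p.1 p.2 y := by
    rw [Finset.sum_insert hij]; ring
  have ha : |ax - ay| ≤ (N : ℝ) * ((N : ℝ) - 1) * c_q * ‖x - y‖ :=
    sum_lip_aux q c_q hc hdiag hLip s x y
  have hA : |(ax + q i j x) - (ay + q i j y)| ≤ (N : ℝ) * ((N : ℝ) - 1) * c_q * ‖x - y‖ := by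
    rw [hAx, hAy]
    exact sum_lip_aux q c_q hc hdiag hLip _ x y
  set Ax := ax + q i j x
  set Ay := ay + q i j y
  have hsub : symmDiff (Set.Ico ax Ax) (Set.Ico ay Ay) ⊆
      Set.Ico (min ax ay) (max ax ay) ∪ Set.Ico (min Ax Ay) (max Ax Ay) := by
    intro t ht
    rw [Set.mem_symmDiff] at ht
    rcases ht with ⟨⟨h1, h2⟩, h3⟩ | ⟨⟨h1, h2⟩, h3⟩ <;>
      rw [Set.mem_Ico, not_and_or, not_le, not_lt] at h3 <;>
      rcases h3 with h3 | h3
    · exact Or.inl ⟨(min_le_left _ _).trans h1, lt_of_lt_of_le h3 (le_max_right _ _)⟩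
    · exact Or.inr ⟨(min_le_right _ _).trans h3, lt_of_lt_of_le h2 (le_max_left _ _)⟩
    · exact Or.inl ⟨(min_le_right _ _).trans h1, lt_of_lt_of_le h3 (le_max_left _ _)⟩
    · exact Or.inr ⟨(min_le_left _ _).trans h3, lt_of_lt_of_le h2 (le_max_right _ _)⟩
  have hmeas : volume (symmDiff (Set.Ico ax Ax) (Set.Ico ay Ay)) ≤
      ENNReal.ofReal (|ax - ay|) + ENNReal.ofReal (|Ax - Ay|) := by
    refine (measure_mono hsub).trans ?_
    refine (measure_union_le _ _).trans ?_
    rw [Real.volume_Ico, Real.volume_Ico, max_sub_min_eq_abs, max_sub_min_eq_abs,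
      abs_sub_comm ay ax, abs_sub_comm Ay Ax]
  have htr : (volume (symmDiff (Set.Ico ax Ax) (Set.Ico ay Ay))).toReal ≤
      |ax - ay| + |Ax - Ay| := by
    have hne : ENNReal.ofReal (|ax - ay|) + ENNReal.ofReal (|Ax - Ay|) ≠ ⊤ := by
      simp
    calc (volume (symmDiff (Set.Ico ax Ax) (Set.Ico ay Ay))).toReal
        ≤ (ENNReal.ofReal (|ax - ay|) + ENNReal.ofReal (|Ax - Ay|)).toReal :=
          ENNReal.toReal_mono hne hmeas
      _ = |ax - ay| + |Ax - Ay| := by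
          rw [ENNReal.toReal_add (by simp) (by simp),
            ENNReal.toReal_ofReal (abs_nonneg _), ENNReal.toReal_ofReal (abs_nonneg _)]
  refine htr.trans ?_
  have hnn : (0:ℝ) ≤ ‖x - y‖ := norm_nonneg _
  nlinarith [ha, hA]
end

section
/- Let α(r) = 4C₂² and γ(r) = (βr² − C₃r^p)/(4C₂²) with constants C₂, C₃ > 0, β ∈ ℝ, and p > 2. Define C(r) = exp(∫₁^r γ(u)/u du) and F(r) = −∫₀^r C(s)^{-1} (∫_s^∞ C(u)/α(u) du) ds. Then F is finite on [0, ∞), nonincreasing, and lim_{r→∞} F(r) = −∫₀^∞ C(s)^{-1}(∫_s^∞ C(u)/α(u) du) ds > −∞; in particular sup_{r>0} (−F(r)) < ∞. -/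
/-!
For `r ≥ 0` one has `C(r) = exp (φ r - φ 1)` with `φ r = (β r² / 2 - C₃ r^p / p) / (4 C₂²)`.
Since `p > 2`, `φ` is concave on some `[M, ∞)` with `-φ' s ≥ C₃ s^(p-1) / (8 C₂²)` there, and the
tangent-line bound `φ u ≤ φ s + φ' s (u - s)` gives `∫_s^∞ exp φ ≤ exp (φ s) / (-φ' s)`. Hence
`C(s)⁻¹ ∫_s^∞ C / α ≤ (2 / C₃) s^(1-p)`, which is integrable at infinity because `p > 2`.
The integrand of `F` being nonnegative, `F` decreases to its finite limit.
-/

open MeasureTheory Filter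

noncomputable def Cfun (β C₂ C₃ p : ℝ) (r : ℝ) : ℝ :=
  Real.exp (∫ u in (1:ℝ)..r, ((β * u ^ 2 - C₃ * u ^ p) / (4 * C₂ ^ 2)) / u)

noncomputable def Gfun (β C₂ C₃ p : ℝ) (s : ℝ) : ℝ :=
  ∫ u in Set.Ioi s, Cfun β C₂ C₃ p u / (4 * C₂ ^ 2)

noncomputable def Ffun (β C₂ C₃ p : ℝ) (r : ℝ) : ℝ :=
  -∫ s in (0:ℝ)..r, (Cfun β C₂ C₃ p s)⁻¹ * Gfun β C₂ C₃ p s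

open Set Real

section NonnegIntegrand

variable {f : ℝ → ℝ} {a : ℝ}

theorem monotoneOn_intervalIntegral_of_nonneg (hf : IntegrableOn f (Ioi a))
    (hf0 : ∀ x ∈ Ioi a, 0 ≤ f x) : MonotoneOn (fun r => ∫ x in a..r, f x) (Ici a) :=
  fun _ hr _ _ hrr' => intervalIntegral.integral_mono_interval le_rfl hr hrr'
    ((ae_restrict_iff' measurableSet_Ioc).2 (Eventually.of_forall fun x hx => hf0 x hx.1))
    ((intervalIntegrable_iff_integrableOn_Ioc_of_le (hr.trans hrr')).2
      (hf.mono_set Ioc_subset_Ioi_self))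

theorem intervalIntegral_le_integral_Ioi_of_nonneg (hf : IntegrableOn f (Ioi a))
    (hf0 : ∀ x ∈ Ioi a, 0 ≤ f x) {r : ℝ} (hr : a ≤ r) :
    ∫ x in a..r, f x ≤ ∫ x in Ioi a, f x := by
  rw [intervalIntegral.integral_of_le hr]
  exact setIntegral_mono_set hf
    ((ae_restrict_iff' measurableSet_Ioi).2 (Eventually.of_forall hf0))
    Ioc_subset_Ioi_self.eventuallyLE

theorem antitone_setIntegral_Ioi_of_nonneg (hf : ∀ s, IntegrableOn f (Ioi s))
    (hf0 : ∀ x, 0 ≤ f x) : Antitone fun s => ∫ x in Ioi s, f x :=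
  fun _ _ h => setIntegral_mono_set (hf _) (Eventually.of_forall hf0)
    (Ioi_subset_Ioi h).eventuallyLE

end NonnegIntegrand

section ConcaveExponent

variable {φ g : ℝ → ℝ} {s : ℝ}

theorem sub_le_mul_sub_of_hasDerivAt_of_antitoneOn (hφ : ∀ x ∈ Ici s, HasDerivAt φ (g x) x)
    (hg : AntitoneOn g (Ici s)) {u : ℝ} (hu : s ≤ u) : φ u - φ s ≤ g s * (u - s) := by
  refine (convex_Ici s).image_sub_le_mul_sub_of_deriv_le
    (fun x hx => (hφ x hx).continuousAt.continuousWithinAt)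
    (fun x hx => (hφ x (interior_subset hx)).differentiableAt.differentiableWithinAt)
    (fun x hx => ?_) s self_mem_Ici u hu hu
  rw [(hφ x (interior_subset hx)).deriv]
  exact hg self_mem_Ici (interior_subset hx) (interior_subset hx)

theorem exp_le_of_hasDerivAt_of_antitoneOn (hφ : ∀ x ∈ Ici s, HasDerivAt φ (g x) x)
    (hg : AntitoneOn g (Ici s)) {u : ℝ} (hu : s ≤ u) :
    exp (φ u) ≤ exp (φ s - g s * s) * exp (g s * u) := by
  have := sub_le_mul_sub_of_hasDerivAt_of_antitoneOn hφ hg hu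
  rw [← exp_add]
  exact exp_le_exp.2 (by linarith)

theorem integrableOn_exp_Ioi_of_hasDerivAt_of_antitoneOn
    (hφ : ∀ x ∈ Ici s, HasDerivAt φ (g x) x) (hg : AntitoneOn g (Ici s)) (hs : g s < 0) :
    IntegrableOn (fun u => exp (φ u)) (Ioi s) := by
  refine Integrable.mono'
    ((integrableOn_exp_mul_Ioi hs s).const_mul (exp (φ s - g s * s))) ?_ ?_
  · refine (continuous_exp.comp_continuousOn fun x hx => ?_).aestronglyMeasurable measurableSet_Ioi
    exact (hφ x (Ioi_subset_Ici_self hx)).continuousAt.continuousWithinAt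
  · filter_upwards [ae_restrict_mem measurableSet_Ioi] with u hu
    rw [norm_of_nonneg (exp_pos _).le]
    exact exp_le_of_hasDerivAt_of_antitoneOn hφ hg hu.le

theorem setIntegral_exp_Ioi_le_of_hasDerivAt_of_antitoneOn
    (hφ : ∀ x ∈ Ici s, HasDerivAt φ (g x) x) (hg : AntitoneOn g (Ici s)) (hs : g s < 0) :
    ∫ u in Ioi s, exp (φ u) ≤ exp (φ s) / -g s :=
  calc ∫ u in Ioi s, exp (φ u) ≤ ∫ u in Ioi s, exp (φ s - g s * s) * exp (g s * u) :=
        setIntegral_mono_on (integrableOn_exp_Ioi_of_hasDerivAt_of_antitoneOn hφ hg hs)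
          ((integrableOn_exp_mul_Ioi hs s).const_mul _) measurableSet_Ioi
          fun u hu => exp_le_of_hasDerivAt_of_antitoneOn hφ hg (le_of_lt hu)
    _ = exp (φ s) / -g s := by
        rw [integral_const_mul, integral_exp_mul_Ioi hs, exp_sub]
        field_simp

end ConcaveExponent

namespace ChenLi

noncomputable def potential (β C₂ C₃ p r : ℝ) : ℝ :=
  (β * r ^ 2 / 2 - C₃ * r ^ p / p) / (4 * C₂ ^ 2)

noncomputable def drift (β C₂ C₃ p u : ℝ) : ℝ :=
  (β * u - C₃ * u ^ (p - 1)) / (4 * C₂ ^ 2)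

variable {β C₂ C₃ p : ℝ}

theorem hasDerivAt_potential (hp : 1 ≤ p) (u : ℝ) :
    HasDerivAt (potential β C₂ C₃ p) (drift β C₂ C₃ p u) u := by
  have hp0 : p ≠ 0 := by positivity
  refine (((((hasDerivAt_pow 2 u).const_mul β).div_const 2).sub
    (((hasDerivAt_rpow_const (Or.inr hp)).const_mul C₃).div_const p)).div_const
    (4 * C₂ ^ 2)).congr_deriv ?_
  rw [drift]
  field_simp
  ring

theorem continuous_potential (hp : 1 ≤ p) : Continuous (potential β C₂ C₃ p) :=
  continuous_iff_continuousAt.2 fun u => (hasDerivAt_potential hp u).continuousAt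

theorem continuous_drift (hp : 1 ≤ p) : Continuous (drift β C₂ C₃ p) :=
  ((continuous_const.mul continuous_id).sub
    (continuous_const.mul (continuous_rpow_const (by linarith)))).div_const _

/-- At `u = 0` the left side is the junk value `x / 0 = 0`, and `drift` vanishes there too. -/
theorem integrand_Cfun_eq_drift (hp : 1 < p) {u : ℝ} (hu : 0 ≤ u) :
    (β * u ^ 2 - C₃ * u ^ p) / (4 * C₂ ^ 2) / u = drift β C₂ C₃ p u := by
  rcases hu.eq_or_lt with rfl | hu
  · simp [drift, zero_rpow (by linarith : p - 1 ≠ 0)]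
  · have : u ^ p = u ^ (p - 1) * u := by rw [← rpow_add_one hu.ne']; ring_nf
    rw [this, drift]
    field_simp

theorem Cfun_eq_exp_potential (hp : 1 < p) {r : ℝ} (hr : 0 ≤ r) :
    Cfun β C₂ C₃ p r = exp (potential β C₂ C₃ p r - potential β C₂ C₃ p 1) := by
  rw [Cfun, intervalIntegral.integral_congr (g := drift β C₂ C₃ p) fun u hu =>
      integrand_Cfun_eq_drift hp ((le_min zero_le_one hr).trans hu.1),
    intervalIntegral.integral_eq_sub_of_hasDerivAt (fun u _ => hasDerivAt_potential hp.le u)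
      ((continuous_drift hp.le).intervalIntegrable 1 r)]

theorem drift_eq_mul {u : ℝ} (hu : 0 < u) :
    drift β C₂ C₃ p u = u * (β - C₃ * u ^ (p - 2)) / (4 * C₂ ^ 2) := by
  rw [drift, show p - 1 = p - 2 + 1 by ring, rpow_add_one hu.ne']
  ring

theorem exists_antitoneOn_drift (hC₃ : 0 < C₃) (hp : 2 < p) :
    ∃ M, 0 < M ∧ AntitoneOn (drift β C₂ C₃ p) (Ici M) ∧
      ∀ s, M ≤ s → C₃ / 2 * s ^ (p - 1) / (4 * C₂ ^ 2) ≤ -drift β C₂ C₃ p s := by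
  obtain ⟨M, hM⟩ := eventually_atTop.1 <|
    ((tendsto_rpow_atTop (sub_pos.2 hp)).eventually_ge_atTop (2 * β / C₃)).and
      (eventually_gt_atTop 0)
  have hpos : ∀ u, M ≤ u → 0 < u := fun u hu => (hM u hu).2
  have hβ : ∀ u, M ≤ u → β - C₃ * u ^ (p - 2) ≤ -(C₃ / 2 * u ^ (p - 2)) := fun u hu => by
    have := (div_le_iff₀ hC₃).1 (hM u hu).1
    linarith
  refine ⟨M, hpos M le_rfl, fun u hu v hv huv => ?_, fun s hs => ?_⟩
  · have hb : β - C₃ * v ^ (p - 2) ≤ β - C₃ * u ^ (p - 2) := by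
      have := rpow_le_rpow (hpos u hu).le huv (sub_pos.2 hp).le
      nlinarith
    have hbv : β - C₃ * v ^ (p - 2) ≤ 0 :=
      (hβ v hv).trans (neg_nonpos.2 (by have := hpos v hv; positivity))
    rw [drift_eq_mul (hpos v hv), drift_eq_mul (hpos u hu)]
    refine div_le_div_of_nonneg_right ?_ (by positivity)
    calc v * (β - C₃ * v ^ (p - 2)) ≤ u * (β - C₃ * v ^ (p - 2)) :=
          mul_le_mul_of_nonpos_right huv hbv
      _ ≤ u * (β - C₃ * u ^ (p - 2)) := mul_le_mul_of_nonneg_left hb (hpos u hu).le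
  · have hs0 := hpos s hs
    rw [drift_eq_mul hs0, show p - 1 = p - 2 + 1 by ring, rpow_add_one hs0.ne', ← neg_div]
    refine div_le_div_of_nonneg_right ?_ (by positivity)
    nlinarith [mul_le_mul_of_nonneg_left (hβ s hs) hs0.le]

theorem integrableOn_exp_potential (hC₂ : 0 < C₂) (hC₃ : 0 < C₃) (hp : 2 < p) (s : ℝ) :
    IntegrableOn (fun u => exp (potential β C₂ C₃ p u)) (Ioi s) := by
  obtain ⟨M, hM0, hanti, hdrift⟩ := exists_antitoneOn_drift (β := β) (C₂ := C₂) hC₃ hp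
  have tail : IntegrableOn (fun u => exp (potential β C₂ C₃ p u)) (Ioi M) := by
    refine integrableOn_exp_Ioi_of_hasDerivAt_of_antitoneOn
      (fun x _ => hasDerivAt_potential (by linarith) x) hanti ?_
    linarith [hdrift M le_rfl, show 0 < C₃ / 2 * M ^ (p - 1) / (4 * C₂ ^ 2) by positivity]
  rcases le_total M s with h | h
  · exact tail.mono_set (Ioi_subset_Ioi h)
  · rw [← Ioc_union_Ioi_eq_Ioi h]
    exact ((continuous_exp.comp (continuous_potential (by linarith))).integrableOn_Ioc).union tail

theorem exists_setIntegral_exp_potential_le (hC₂ : 0 < C₂) (hC₃ : 0 < C₃) (hp : 2 < p) :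
    ∃ M, 0 < M ∧ ∀ s, M ≤ s → ∫ u in Ioi s, exp (potential β C₂ C₃ p u) ≤
      exp (potential β C₂ C₃ p s) * (8 * C₂ ^ 2 / C₃ * s ^ (1 - p)) := by
  obtain ⟨M, hM0, hanti, hdrift⟩ := exists_antitoneOn_drift (β := β) (C₂ := C₂) hC₃ hp
  refine ⟨M, hM0, fun s hs => ?_⟩
  have hs0 : 0 < s := hM0.trans_le hs
  have hlow : 0 < C₃ / 2 * s ^ (p - 1) / (4 * C₂ ^ 2) := by positivity
  calc ∫ u in Ioi s, exp (potential β C₂ C₃ p u)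
      ≤ exp (potential β C₂ C₃ p s) / -drift β C₂ C₃ p s :=
        setIntegral_exp_Ioi_le_of_hasDerivAt_of_antitoneOn
          (fun x _ => hasDerivAt_potential (by linarith) x) (hanti.mono (Ici_subset_Ici.2 hs))
          (by linarith [hdrift s hs])
    _ ≤ exp (potential β C₂ C₃ p s) / (C₃ / 2 * s ^ (p - 1) / (4 * C₂ ^ 2)) :=
        div_le_div_of_nonneg_left (exp_pos _).le hlow (hdrift s hs)
    _ = exp (potential β C₂ C₃ p s) * (8 * C₂ ^ 2 / C₃ * s ^ (1 - p)) := by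
        rw [show 1 - p = -(p - 1) by ring, rpow_neg hs0.le]
        field_simp
        ring

theorem Cfun_div_eq (hp : 1 < p) {u : ℝ} (hu : 0 ≤ u) :
    Cfun β C₂ C₃ p u / (4 * C₂ ^ 2) =
      exp (potential β C₂ C₃ p u) / exp (potential β C₂ C₃ p 1) / (4 * C₂ ^ 2) := by
  rw [Cfun_eq_exp_potential hp hu, exp_sub]

theorem Gfun_eq (hp : 1 < p) {s : ℝ} (hs : 0 ≤ s) :
    Gfun β C₂ C₃ p s = (∫ u in Ioi s, exp (potential β C₂ C₃ p u)) /
      exp (potential β C₂ C₃ p 1) / (4 * C₂ ^ 2) := by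
  rw [Gfun, setIntegral_congr_fun measurableSet_Ioi fun u hu => Cfun_div_eq hp (hs.trans hu.le),
    integral_div, integral_div]

theorem Cfun_inv_mul_Gfun_eq (hp : 1 < p) {s : ℝ} (hs : 0 ≤ s) :
    (Cfun β C₂ C₃ p s)⁻¹ * Gfun β C₂ C₃ p s = exp (-potential β C₂ C₃ p s) *
      (∫ u in Ioi s, exp (potential β C₂ C₃ p u)) / (4 * C₂ ^ 2) := by
  rw [Cfun_eq_exp_potential hp hs, Gfun_eq hp hs, exp_sub, exp_neg]
  field_simp

theorem integrableOn_exp_neg_potential_mul (hC₂ : 0 < C₂) (hC₃ : 0 < C₃) (hp : 2 < p) :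
    IntegrableOn (fun s => exp (-potential β C₂ C₃ p s) *
      ∫ u in Ioi s, exp (potential β C₂ C₃ p u)) (Ioi 0) := by
  obtain ⟨M, hM0, hM⟩ := exists_setIntegral_exp_potential_le (β := β) hC₂ hC₃ hp
  have hcont : Continuous fun s => exp (-potential β C₂ C₃ p s) :=
    continuous_exp.comp (continuous_potential (by linarith)).neg
  have hI0 : ∀ s, 0 ≤ ∫ u in Ioi s, exp (potential β C₂ C₃ p u) := fun s =>
    setIntegral_nonneg measurableSet_Ioi fun _ _ => (exp_pos _).le
  have hanti : Antitone fun s => ∫ u in Ioi s, exp (potential β C₂ C₃ p u) :=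
    antitone_setIntegral_Ioi_of_nonneg (integrableOn_exp_potential hC₂ hC₃ hp)
      fun _ => (exp_pos _).le
  rw [← Ioc_union_Ioi_eq_Ioi hM0.le]
  refine IntegrableOn.union ?_ ?_
  · refine hcont.integrableOn_Ioc.mul_bdd hanti.measurable.aestronglyMeasurable
      (c := ∫ u in Ioi 0, exp (potential β C₂ C₃ p u)) ?_
    filter_upwards [ae_restrict_mem measurableSet_Ioc] with s hs
    rw [norm_of_nonneg (hI0 s)]
    exact hanti hs.1.le
  · refine Integrable.mono' ((integrableOn_Ioi_rpow_of_lt (by linarith : 1 - p < -1) hM0).const_mul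
      (8 * C₂ ^ 2 / C₃)) (hcont.measurable.mul hanti.measurable).aestronglyMeasurable ?_
    filter_upwards [ae_restrict_mem measurableSet_Ioi] with s hs
    rw [norm_of_nonneg (mul_nonneg (exp_pos _).le (hI0 s))]
    calc exp (-potential β C₂ C₃ p s) * ∫ u in Ioi s, exp (potential β C₂ C₃ p u)
        ≤ exp (-potential β C₂ C₃ p s) *
          (exp (potential β C₂ C₃ p s) * (8 * C₂ ^ 2 / C₃ * s ^ (1 - p))) :=
          mul_le_mul_of_nonneg_left (hM s hs.le) (exp_pos _).le
      _ = 8 * C₂ ^ 2 / C₃ * s ^ (1 - p) := by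
          rw [← mul_assoc, ← exp_add, neg_add_cancel, exp_zero, one_mul]

theorem integrableOn_Cfun_div (hC₂ : 0 < C₂) (hC₃ : 0 < C₃) (hp : 2 < p) {s : ℝ} (hs : 0 ≤ s) :
    IntegrableOn (fun u => Cfun β C₂ C₃ p u / (4 * C₂ ^ 2)) (Ioi s) :=
  IntegrableOn.congr_fun
    (((integrableOn_exp_potential hC₂ hC₃ hp s).div_const _).div_const _) (fun u hu => (Cfun_div_eq (by linarith) (hs.trans hu.le)).symm) measurableSet_Ioi

theorem integrableOn_Cfun_inv_mul_Gfun (hC₂ : 0 < C₂) (hC₃ : 0 < C₃) (hp : 2 < p) :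
    IntegrableOn (fun s => (Cfun β C₂ C₃ p s)⁻¹ * Gfun β C₂ C₃ p s) (Ioi 0) :=
  IntegrableOn.congr_fun ((integrableOn_exp_neg_potential_mul hC₂ hC₃ hp).div_const _)
    (fun s hs => (Cfun_inv_mul_Gfun_eq (by linarith) (le_of_lt hs)).symm) measurableSet_Ioi

theorem Cfun_inv_mul_Gfun_nonneg (s : ℝ) : 0 ≤ (Cfun β C₂ C₃ p s)⁻¹ * Gfun β C₂ C₃ p s :=
  mul_nonneg (inv_nonneg.2 (exp_pos _).le)
    (setIntegral_nonneg measurableSet_Ioi fun _ _ => div_nonneg (exp_pos _).le (by positivity))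

end ChenLi

/-- The Chen–Li functionals for coupling by reflection: `F` is finite,
nonincreasing, has a finite limit at infinity, and `-F` is bounded. -/
theorem stmt8 (β C₂ C₃ p : ℝ) (hC₂ : 0 < C₂) (hC₃ : 0 < C₃) (hp : 2 < p) :
    (∀ s : ℝ, 0 ≤ s →
      IntegrableOn (fun u => Cfun β C₂ C₃ p u / (4 * C₂ ^ 2)) (Set.Ioi s)) ∧
    AntitoneOn (Ffun β C₂ C₃ p) (Set.Ici 0) ∧
    IntegrableOn (fun s => (Cfun β C₂ C₃ p s)⁻¹ * Gfun β C₂ C₃ p s) (Set.Ioi 0) ∧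
    Tendsto (Ffun β C₂ C₃ p) atTop
      (nhds (-∫ s in Set.Ioi (0:ℝ), (Cfun β C₂ C₃ p s)⁻¹ * Gfun β C₂ C₃ p s)) ∧
    ∃ B : ℝ, ∀ r : ℝ, 0 < r → -(Ffun β C₂ C₃ p r) ≤ B := by
  have hint := ChenLi.integrableOn_Cfun_inv_mul_Gfun (β := β) hC₂ hC₃ hp
  have hnonneg : ∀ s ∈ Ioi (0:ℝ), 0 ≤ (Cfun β C₂ C₃ p s)⁻¹ * Gfun β C₂ C₃ p s :=
    fun s _ => ChenLi.Cfun_inv_mul_Gfun_nonneg s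
  refine ⟨fun s hs => ChenLi.integrableOn_Cfun_div hC₂ hC₃ hp hs,
    (monotoneOn_intervalIntegral_of_nonneg hint hnonneg).neg, hint,
    (intervalIntegral_tendsto_integral_Ioi 0 hint tendsto_id).neg, _, fun r hr =>
    (neg_neg _).trans_le (intervalIntegral_le_integral_Ioi_of_nonneg hint hnonneg hr.le)⟩
end

section
/- Let S = {1,...,N} with q_{ij}(x) = 0 whenever |i−j| ≥ 2 (birth–death structure), and suppose for 1 ≤ i ≤ N−2 the sum q_{i,i+1}(x) + q_{i+1,i}(x) is independent of x. Define q̄_{i,i+1} = sup_x q_{i,i+1}(x), q̄_{i+1,i} = inf_x q_{i+1,i}(x), and the cumulative thresholds s_i(x) = Σ_{j=1}^{i−1} q_j(x) + q_{i,i−1}(x) and s̄_i = Σ_{j=1}^{i−1} q̄_j + q̄_{i,i−1}, where q_j(x) = q_{j,j−1}(x) + q_{j,j+1}(x) and q̄_j analogously. Then for all x ∈ ℝⁿ and 2 ≤ i ≤ N−1: s_i(x) = s̄_i, and Σ_{j=1}^{i} q_j(x) ≤ Σ_{j=1}^{i−1}(q̄_{j,j+1} + q̄_{j+1,j}) + q̄_{i,i+1}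 for 1 ≤ i ≤ N−1. Consequently Γ_{i,i+1}(x) ⊆ Γ̄_{i,i+1} for 1 ≤ i ≤ N−1 and Γ̄_{i,i−1} ⊆ Γ_{i,i−1}(x) for 2 ≤ i ≤ N. -/
open Finset

/-- Telescoping identity for sums over `Ico 1 i`. -/
lemma tele2' (a b : ℕ → ℝ) : ∀ i : ℕ, 1 ≤ i →
    (∑ j ∈ Finset.Ico 1 i, (a j + b j)) + a i
      = (∑ j ∈ Finset.Ico 1 i, (b j + a (j + 1))) + a 1 := by
  intro i hi
  induction i with
  | zero => omega
  | succ k ih =>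
    rcases Nat.eq_zero_or_pos k with hk | hk
    · subst hk; simp
    · rw [Finset.sum_Ico_succ_top hk, Finset.sum_Ico_succ_top hk]
      have := ih hk
      linarith

/-- Telescoping identity for sums over `Icc 1 i`. -/
lemma teleIcc' (a b : ℕ → ℝ) (i : ℕ) (hi : 1 ≤ i) :
    (∑ j ∈ Finset.Icc 1 i, (a j + b j))
      = (∑ j ∈ Finset.Ico 1 i, (b j + a (j + 1))) + a 1 + b i := by
  rw [← Finset.Ico_add_one_right_eq_Icc, Finset.sum_Ico_succ_top hi]
  have := tele2' a b i hi
  linarith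

/-- Birth–death case: identities and inclusions making the constructed Markov
chain dominate the state-dependent one pathwise. -/
theorem stmt16 (n N : ℕ) (hN : 2 ≤ N) (q : ℕ → ℕ → (Fin n → ℝ) → ℝ)
    (hnn : ∀ i j x, 0 ≤ q i j x)
    (hbd : ∀ i j x, 2 ≤ max i j - min i j → q i j x = 0)
    (hrange : ∀ i j x, (i < 1 ∨ N < i ∨ j < 1 ∨ N < j) → q i j x = 0)
    (hbddA : ∀ i, BddAbove (Set.range (fun x => q i (i + 1) x)))
    (hconst : ∀ i x y, 1 ≤ i → i ≤ N - 2 →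
      q i (i + 1) x + q (i + 1) i x = q i (i + 1) y + q (i + 1) i y)
    (hend : ∀ x, (⨆ y, q (N - 1) N y) + (⨅ y, q N (N - 1) y)
      ≤ q (N - 1) N x + q N (N - 1) x) :
    (∀ (x : Fin n → ℝ) (i : ℕ), 2 ≤ i → i ≤ N - 1 →
      (∑ j ∈ Finset.Ico 1 i, (q j (j - 1) x + q j (j + 1) x)) + q i (i - 1) x
        = (∑ j ∈ Finset.Ico 1 i, ((⨅ y, q j (j - 1) y) + ⨆ y, q j (j + 1) y))
            + ⨅ y, q i (i - 1) y) ∧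
    (∀ (x : Fin n → ℝ) (i : ℕ), 1 ≤ i → i ≤ N - 1 →
      (∑ j ∈ Finset.Icc 1 i, (q j (j - 1) x + q j (j + 1) x)) ≤
        (∑ j ∈ Finset.Ico 1 i, ((⨆ y, q j (j + 1) y) + ⨅ y, q (j + 1) j y))
          + ⨆ y, q i (i + 1) y) ∧
    (∀ (x : Fin n → ℝ) (i : ℕ), 1 ≤ i → i ≤ N - 1 →
      Set.Ico ((∑ j ∈ Finset.Ico 1 i, (q j (j - 1) x + q j (j + 1) x)) + q i (i - 1) x)
          (((∑ j ∈ Finset.Ico 1 i, (q j (j - 1) x + q j (j + 1) x)) + q i (i - 1) x)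
            + q i (i + 1) x)
        ⊆ Set.Ico
            ((∑ j ∈ Finset.Ico 1 i, ((⨅ y, q j (j - 1) y) + ⨆ y, q j (j + 1) y))
              + ⨅ y, q i (i - 1) y)
            (((∑ j ∈ Finset.Ico 1 i, ((⨅ y, q j (j - 1) y) + ⨆ y, q j (j + 1) y))
              + ⨅ y, q i (i - 1) y) + ⨆ y, q i (i + 1) y)) ∧
    (∀ (x : Fin n → ℝ) (i : ℕ), 2 ≤ i → i ≤ N →
      Set.Ico (∑ j ∈ Finset.Ico 1 i, ((⨅ y, q j (j - 1) y) + ⨆ y, q j (j + 1) y))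
          ((∑ j ∈ Finset.Ico 1 i, ((⨅ y, q j (j - 1) y) + ⨆ y, q j (j + 1) y))
            + ⨅ y, q i (i - 1) y)
        ⊆ Set.Ico (∑ j ∈ Finset.Ico 1 i, (q j (j - 1) x + q j (j + 1) x))
            ((∑ j ∈ Finset.Ico 1 i, (q j (j - 1) x + q j (j + 1) x)) + q i (i - 1) x)) := by
  obtain ⟨M, rfl⟩ : ∃ M, N = M + 2 := ⟨N - 2, by omega⟩
  have hbb : ∀ i j : ℕ, BddBelow (Set.range fun y => q i j y) := by
    intro i j
    exact ⟨0, by rintro t ⟨y, rfl⟩; exact hnn i j y⟩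
  -- the key identity for interior indices
  have hK : ∀ (j : ℕ) (x : Fin n → ℝ), 1 ≤ j → j ≤ M →
      (⨆ y, q j (j + 1) y) + (⨅ y, q (j + 1) j y) = q j (j + 1) x + q (j + 1) j x := by
    intro j x hj hjM
    have hc : ∀ y, q j (j + 1) y + q (j + 1) j y = q j (j + 1) x + q (j + 1) j x :=
      fun y => hconst j y x hj (by omega)
    have h1 : (⨆ y, q j (j + 1) y) ≤
        (q j (j + 1) x + q (j + 1) j x) - ⨅ y, q (j + 1) j y := by
      apply ciSup_le
      intro y
      have h := ciInf_le (hbb (j + 1) j) y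
      have := hc y
      linarith
    have h2 : (q j (j + 1) x + q (j + 1) j x) - (⨆ y, q j (j + 1) y) ≤
        ⨅ y, q (j + 1) j y := by
      apply le_ciInf
      intro y
      have h := le_ciSup (hbddA j) y
      have := hc y
      linarith
    linarith
  have ha1 : ∀ x : Fin n → ℝ, q 1 0 x = 0 := fun x => hrange 1 0 x (by omega)
  have hinf1 : (⨅ y : Fin n → ℝ, q 1 0 y) = 0 := by
    simp only [ha1]; exact ciInf_const
  -- equality of the left cumulative thresholds, for 1 ≤ i ≤ N-1
  have keyEq : ∀ (x : Fin n → ℝ) (i : ℕ), 1 ≤ i → i ≤ M + 1 →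
      (∑ j ∈ Finset.Ico 1 i, (q j (j - 1) x + q j (j + 1) x)) + q i (i - 1) x
        = (∑ j ∈ Finset.Ico 1 i, ((⨅ y, q j (j - 1) y) + ⨆ y, q j (j + 1) y))
            + ⨅ y, q i (i - 1) y := by
    intro x i hi hiN
    have t1 := tele2' (fun j => q j (j - 1) x) (fun j => q j (j + 1) x) i hi
    have t2 := tele2' (fun j => ⨅ y, q j (j - 1) y) (fun j => ⨆ y, q j (j + 1) y) i hi
    simp only [Nat.add_sub_cancel] at t1 t2
    rw [t1, t2]
    have hs : (∑ j ∈ Finset.Ico 1 i, (q j (j + 1) x + q (j + 1) j x))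
        = ∑ j ∈ Finset.Ico 1 i, ((⨆ y, q j (j + 1) y) + ⨅ y, q (j + 1) j y) := by
      refine Finset.sum_congr rfl fun j hj => ?_
      rw [Finset.mem_Ico] at hj
      exact (hK j x hj.1 (by omega)).symm
    rw [hs]
    norm_num [ha1 x, hinf1]
  refine ⟨fun x i hi hiN => keyEq x i (by omega) (by omega), ?_, ?_, ?_⟩
  · -- second claim
    intro x i hi hiN
    have t1 := teleIcc' (fun j => q j (j - 1) x) (fun j => q j (j + 1) x) i hi
    simp only [Nat.add_sub_cancel, Nat.sub_self] at t1
    rw [t1]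
    have hs : (∑ j ∈ Finset.Ico 1 i, (q j (j + 1) x + q (j + 1) j x))
        = ∑ j ∈ Finset.Ico 1 i, ((⨆ y, q j (j + 1) y) + ⨅ y, q (j + 1) j y) := by
      refine Finset.sum_congr rfl fun j hj => ?_
      rw [Finset.mem_Ico] at hj
      exact (hK j x hj.1 (by omega)).symm
    rw [hs, ha1 x]
    have := le_ciSup (hbddA i) x
    linarith
  · -- third claim
    intro x i hi hiN
    have h := keyEq x i hi (by omega)
    have hb := le_ciSup (hbddA i) x
    exact Set.Ico_subset_Ico (le_of_eq h.symm) (by linarith)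
  · -- fourth claim
    intro x i hi hiN
    rcases Nat.lt_or_ge i (M + 2) with hlt | hge
    · have h := keyEq x i (by omega) (by omega)
      have ha := ciInf_le (hbb i (i - 1)) x
      exact Set.Ico_subset_Ico (by linarith) (le_of_eq h.symm)
    · have hi2 : i = M + 2 := by omega
      subst hi2
      have hkey := keyEq x (M + 1) (by omega) (by omega)
      have hsplit1 : (∑ j ∈ Finset.Ico 1 (M + 2), (q j (j - 1) x + q j (j + 1) x))
          = (∑ j ∈ Finset.Ico 1 (M + 1), (q j (j - 1) x + q j (j + 1) x))
            + (q (M + 1) (M + 1 - 1) x + q (M + 1) (M + 1 + 1) x) :=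
        Finset.sum_Ico_succ_top (by omega) _
      have hsplit2 : (∑ j ∈ Finset.Ico 1 (M + 2), ((⨅ y, q j (j - 1) y) + ⨆ y, q j (j + 1) y))
          = (∑ j ∈ Finset.Ico 1 (M + 1), ((⨅ y, q j (j - 1) y) + ⨆ y, q j (j + 1) y))
            + ((⨅ y, q (M + 1) (M + 1 - 1) y) + ⨆ y, q (M + 1) (M + 1 + 1) y) :=
        Finset.sum_Ico_succ_top (by omega) _
      have hr1 : M + 1 - 1 = M := rfl
      have hr2 : M + 1 + 1 = M + 2 := rfl
      have hr3 : M + 2 - 1 = M + 1 := rfl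
      rw [hr1, hr2] at hsplit1 hsplit2
      rw [hr1] at hkey
      have hendx := hend x
      rw [hr3] at hendx
      have hinfle := ciInf_le (hbb (M + 1) M) x
      have hsuple := le_ciSup (hbddA (M + 1)) x
      rw [hr2] at hsuple
      refine Set.Ico_subset_Ico ?_ ?_
      · rw [hsplit1, hsplit2]; linarith
      · rw [hsplit1, hsplit2, hr3]; linarith
end
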